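/- Let j be a half-integer (2j ∈ ℕ) and let s, m satisfy j+s, j−s, j+m, j−m ∈ ℕ and s ≤ j−1. Set ψ₁ = √(j+s+1)·Y^j_{sm} and ψ₂ = √(j−s)·Y^j_{s+1,m}. Then 2i·(X₃ψ₁ + X₋ψ₂) = 2j·ψ₁ and 2i·(X₊ψ₁ − X₃ψ₂) = 2j·ψ₂. Likewise, setting φ₁ = −√(j−s)·Y^j_{sm} and φ₂ = √(j+s+1)·Y^j_{s+1,m}, one has 2i·(X₃φ₁ + X₋φ₂) = −(2j+2)·φ₁ and 2i·(X₊φ₁ − X₃φ₂) = −(2j+2)·φ₂. (These are the component equations expressing that Ψ^{j±}_{sm} are eigenspinors of the Dirac operator on the 3-sphere of radius ℓ with eigenvalues λ± = (1/ℓ)(1/2 ± (2j+1)).) -/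

import Mathlib

/-!
Up to its normalising constant, `Ypoly a b c d` is the sum `ySum a b c` of the monomials
`(-1)^r / (p! q! r! t!) • z₁^p z₂^q w₁^r w₂^t` with `p + q = a`, `r + t = b`, `q + r = c`.
The operator `X i * ∂ⱼ` moves one unit of degree from the `j`-th variable to the `i`-th, and the
factorial weights turn the factor produced by the derivative into the new exponent of the `i`-th
variable (up to the sign attached to `w₁`). Summed over the fibre these exponents add up to
`a + 1` for `X₊` and to `b + 1` for `X₋`, so that, after normalisation,
`X₊ Y_s = -i √((j - s)(j + s + 1)) Y_{s+1}` and `X₋ Y_{s+1} = -i √((j - s)(j + s + 1)) Y_s`,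
while `X₃ Y_s = -i s Y_s` because `X₃` measures the `w`-degree minus the `z`-degree. The four
equations are then identities between coefficients.
-/

open MvPolynomial

noncomputable section

/-- Work in ℂ[z₁,z₂,w₁,w₂]: variable 0 is z₁, 1 is z₂, 2 is w₁, 3 is w₂
(w₁, w₂ playing the role of the complex conjugates z̄₁, z̄₂). -/
abbrev R4 := MvPolynomial (Fin 4) ℂ

/-- The derivation X₊ = i(z₁·∂/∂w₂ − z₂·∂/∂w₁). -/
def Xp (P : R4) : R4 := Complex.I • (X 0 * pderiv 3 P - X 1 * pderiv 2 P)

/-- The derivation X₋ = i(w₂·∂/∂z₁ − w₁·∂/∂z₂). -/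
def Xm (P : R4) : R4 := Complex.I • (X 3 * pderiv 0 P - X 2 * pderiv 1 P)

/-- The derivation X₃ = (i/2)(w₁·∂/∂w₁ + w₂·∂/∂w₂ − z₁·∂/∂z₁ − z₂·∂/∂z₂). -/
def X3 (P : R4) : R4 :=
  (Complex.I / 2) •
    (X 2 * pderiv 2 P + X 3 * pderiv 3 P - X 0 * pderiv 0 P - X 1 * pderiv 1 P)

/-- The harmonic Y^j_{sm} with a = j+s, b = j−s, c = j+m, d = j−m (so a+b = c+d = 2j):
Y^j_{sm} = (−1)^{j−s}·(a!b!c!d!)^{1/2} · Σ_k (−1)^k/((c−k)!·k!·(b−k)!·(a−c+k)!) ·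
z₁^{a−c+k}·z₂^{c−k}·w₁^k·w₂^{b−k}, summed over max(0,c−a) ≤ k ≤ min(c,b);
note s−m = a−c, j+m−k = c−k, j−s−k = b−k, s−m+k = a−c+k. -/
def Ypoly (a b c d : ℕ) : R4 :=
  ((-1 : ℂ) ^ b *
      (Real.sqrt ((a.factorial * b.factorial * c.factorial * d.factorial : ℕ)) : ℂ)) •
    ∑ k ∈ Finset.Icc (c - a) (min c b),
      ((-1 : ℂ) ^ k /
          (((c - k).factorial * k.factorial * (b - k).factorial
              * (a + k - c).factorial : ℕ) : ℂ)) •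
        (X 0 ^ (a + k - c) * X 1 ^ (c - k) * X 2 ^ k * X 3 ^ (b - k))

open Finset
open scoped Nat

lemma MvPolynomial.X_mul_pderiv_monomial' {σ R : Type*} [CommSemiring R] (i j : σ)
    (m : σ →₀ ℕ) (r : R) :
    X i * pderiv j (monomial m r) =
      monomial (m - Finsupp.single j 1 + Finsupp.single i 1) (r * m j) := by
  rw [pderiv_monomial, X, monomial_mul, one_mul, add_comm]

lemma Real.sqrt_mul_sqrt_eq_mul_sqrt {x y z w : ℝ} (hx : 0 ≤ x) (hz : 0 ≤ z)
    (h : x * y = z ^ 2 * w) : √x * √y = z * √w := by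
  rw [← Real.sqrt_mul hx, h, Real.sqrt_mul (sq_nonneg z), Real.sqrt_sq hz]

def weightDerivation : Derivation ℂ R4 R4 :=
  (X 2 : R4) • pderiv 2 + (X 3 : R4) • pderiv 3 - (X 0 : R4) • pderiv 0 - (X 1 : R4) • pderiv 1

lemma X3_eq_smul_weightDerivation (P : R4) : X3 P = (Complex.I / 2) • weightDerivation P := by
  simp [X3, weightDerivation]

lemma X3_smul (α : ℂ) (P : R4) : X3 (α • P) = α • X3 P := by
  rw [X3_eq_smul_weightDerivation, X3_eq_smul_weightDerivation, Derivation.map_smul, smul_comm]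

lemma Xp_smul (α : ℂ) (P : R4) : Xp (α • P) = α • Xp P := by
  rw [Xp, Xp, Derivation.map_smul, Derivation.map_smul, mul_smul_comm, mul_smul_comm, ← smul_sub,
    smul_comm]

lemma Xm_smul (α : ℂ) (P : R4) : Xm (α • P) = α • Xm P := by
  rw [Xm, Xm, Derivation.map_smul, Derivation.map_smul, mul_smul_comm, mul_smul_comm, ← smul_sub,
    smul_comm]

def yExp (p q r t : ℕ) : Fin 4 →₀ ℕ :=
  Finsupp.single 0 p + Finsupp.single 1 q + Finsupp.single 2 r + Finsupp.single 3 t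

def yTerm (p q r t : ℕ) : R4 :=
  monomial (yExp p q r t) ((-1) ^ r / ((p ! * q ! * r ! * t ! : ℕ) : ℂ))

/-- The sum in `Ypoly`, indexed by the exponents `(p, q)` of `z₁, z₂` and `(r, t)` of `w₁, w₂`,
so that no truncated subtraction occurs. -/
def ySum (a b c : ℕ) : R4 :=
  ∑ x ∈ antidiagonal a, ∑ y ∈ antidiagonal b,
    if x.2 + y.1 = c then yTerm x.1 x.2 y.1 y.2 else 0

lemma Ypoly_eq_smul_ySum (a b c d : ℕ) :
    Ypoly a b c d = ((-1 : ℂ) ^ b * (√((a ! * b ! * c ! * d ! : ℕ) : ℝ) : ℂ)) • ySum a b c := by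
  have hfiber : ySum a b c = ∑ x ∈ antidiagonal a ×ˢ antidiagonal b with x.1.2 + x.2.1 = c,
      yTerm x.1.1 x.1.2 x.2.1 x.2.2 := by
    rw [sum_filter, sum_product]
    rfl
  rw [Ypoly, hfiber]
  congr 1
  refine sum_nbij' (fun k => ((a + k - c, c - k), (k, b - k))) (fun x => x.2.1) ?_ ?_ ?_ ?_ ?_
  · intro k hk
    simp only [mem_Icc, mem_filter, mem_product, HasAntidiagonal.mem_antidiagonal] at hk ⊢
    omega
  · intro x hx
    simp only [mem_Icc, mem_filter, mem_product, HasAntidiagonal.mem_antidiagonal] at hx ⊢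
    omega
  · intro k _
    rfl
  · intro x hx
    simp only [mem_filter, mem_product, HasAntidiagonal.mem_antidiagonal] at hx
    ext <;> simp <;> omega
  · intro k _
    rw [yTerm, yExp, smul_eq_C_mul]
    simp only [X_pow_eq_monomial, monomial_mul, C_mul_monomial, mul_one]
    congr 1
    push_cast
    ring

lemma weightDerivation_yTerm (p q r t : ℕ) :
    weightDerivation (yTerm p q r t) = ((r + t : ℂ) - (p + q)) • yTerm p q r t := by
  simp only [weightDerivation, Derivation.sub_apply, Derivation.add_apply, Derivation.smul_apply,
    smul_eq_mul, yTerm, X_mul_pderiv_monomial, ← Nat.cast_smul_eq_nsmul ℂ]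
  simp only [yExp, Finsupp.coe_add, Pi.add_apply, Finsupp.single_apply]
  norm_num
  module

lemma X0_mul_pderiv3_yTerm_succ (p q r t : ℕ) :
    X 0 * pderiv 3 (yTerm p q r (t + 1)) = ((p : ℂ) + 1) • yTerm (p + 1) q r t := by
  rw [yTerm, X_mul_pderiv_monomial', yTerm, smul_monomial]
  refine congrArg₂ (fun s a => (monomial s a : R4)) ?_ ?_
  · ext i; fin_cases i <;> simp [yExp]
  · simp [yExp, Nat.factorial_succ]
    field_simp

lemma X1_mul_pderiv2_yTerm_succ (p q r t : ℕ) :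
    X 1 * pderiv 2 (yTerm p q (r + 1) t) = -(((q : ℂ) + 1) • yTerm p (q + 1) r t) := by
  rw [yTerm, X_mul_pderiv_monomial', yTerm, smul_monomial, ← map_neg]
  refine congrArg₂ (fun s a => (monomial s a : R4)) ?_ ?_
  · ext i; fin_cases i <;> simp [yExp]
  · simp [yExp, Nat.factorial_succ, pow_succ]
    field_simp

lemma X3_mul_pderiv0_yTerm_succ (p q r t : ℕ) :
    X 3 * pderiv 0 (yTerm (p + 1) q r t) = ((t : ℂ) + 1) • yTerm p q r (t + 1) := by
  rw [yTerm, X_mul_pderiv_monomial', yTerm, smul_monomial]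
  refine congrArg₂ (fun s a => (monomial s a : R4)) ?_ ?_
  · ext i; fin_cases i <;> simp [yExp]
  · simp [yExp, Nat.factorial_succ]
    field_simp

lemma X2_mul_pderiv1_yTerm_succ (p q r t : ℕ) :
    X 2 * pderiv 1 (yTerm p (q + 1) r t) = -(((r : ℂ) + 1) • yTerm p q (r + 1) t) := by
  rw [yTerm, X_mul_pderiv_monomial', yTerm, smul_monomial, ← map_neg]
  refine congrArg₂ (fun s a => (monomial s a : R4)) ?_ ?_
  · ext i; fin_cases i <;> simp [yExp]
  · simp [yExp, Nat.factorial_succ, pow_succ]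
    field_simp

lemma X3_ySum (a b c : ℕ) : X3 (ySum a b c) = (Complex.I / 2 * ((b : ℂ) - a)) • ySum a b c := by
  rw [X3_eq_smul_weightDerivation, mul_smul]
  congr 1
  simp only [ySum, map_sum, apply_ite, map_zero, weightDerivation_yTerm, smul_sum, smul_zero]
  refine sum_congr rfl fun x hx => sum_congr rfl fun y hy => ?_
  rw [HasAntidiagonal.mem_antidiagonal] at hx hy
  rw [← hx, ← hy, Nat.cast_add, Nat.cast_add]

lemma X0_mul_pderiv3_ySum (a b c : ℕ) :
    X 0 * pderiv 3 (ySum a (b + 1) c) = ∑ x ∈ antidiagonal (a + 1), ∑ y ∈ antidiagonal b,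
      if x.2 + y.1 = c then (x.1 : ℂ) • yTerm x.1 x.2 y.1 y.2 else 0 := by
  have h0 (p q r : ℕ) : X 0 * pderiv 3 (yTerm p q r 0) = 0 := by simp [yTerm, yExp]
  conv_lhs => simp only [ySum, map_sum, mul_sum, map_add, mul_add, Nat.sum_antidiagonal_succ',
    apply_ite, map_zero, mul_ite, mul_zero, h0, ite_self, zero_add, X0_mul_pderiv3_yTerm_succ]
  rw [Nat.sum_antidiagonal_succ]
  simp only [Nat.cast_zero, zero_smul, ite_self, sum_const_zero, zero_add, Nat.cast_succ]

lemma X1_mul_pderiv2_ySum (a b c : ℕ) :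
    X 1 * pderiv 2 (ySum a (b + 1) c) = -∑ x ∈ antidiagonal (a + 1), ∑ y ∈ antidiagonal b,
      if x.2 + y.1 = c then (x.2 : ℂ) • yTerm x.1 x.2 y.1 y.2 else 0 := by
  have h0 (p q t : ℕ) : X 1 * pderiv 2 (yTerm p q 0 t) = 0 := by simp [yTerm, yExp]
  conv_lhs => simp only [ySum, map_sum, mul_sum, map_add, mul_add, Nat.sum_antidiagonal_succ,
    apply_ite, map_zero, mul_ite, mul_zero, h0, ite_self, zero_add, X1_mul_pderiv2_yTerm_succ]
  rw [Nat.sum_antidiagonal_succ']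
  simp only [Nat.cast_zero, zero_smul, ite_self, sum_const_zero, zero_add, Nat.cast_succ,
    ← sum_neg_distrib, neg_ite, neg_zero, add_assoc, add_comm 1]

lemma X3_mul_pderiv0_ySum (a b c : ℕ) :
    X 3 * pderiv 0 (ySum (a + 1) b c) = ∑ x ∈ antidiagonal a, ∑ y ∈ antidiagonal (b + 1),
      if x.2 + y.1 = c then (y.2 : ℂ) • yTerm x.1 x.2 y.1 y.2 else 0 := by
  have h0 (q r t : ℕ) : X 3 * pderiv 0 (yTerm 0 q r t) = 0 := by simp [yTerm, yExp]
  conv_lhs => simp only [ySum, map_sum, mul_sum, map_add, mul_add, Nat.sum_antidiagonal_succ,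
    apply_ite, map_zero, mul_ite, mul_zero, h0, ite_self, sum_const_zero, zero_add,
    X3_mul_pderiv0_yTerm_succ]
  simp only [Nat.sum_antidiagonal_succ', Nat.cast_zero, zero_smul, ite_self, zero_add,
    Nat.cast_succ]

lemma X2_mul_pderiv1_ySum (a b c : ℕ) :
    X 2 * pderiv 1 (ySum (a + 1) b c) = -∑ x ∈ antidiagonal a, ∑ y ∈ antidiagonal (b + 1),
      if x.2 + y.1 = c then (y.1 : ℂ) • yTerm x.1 x.2 y.1 y.2 else 0 := by
  have h0 (p r t : ℕ) : X 2 * pderiv 1 (yTerm p 0 r t) = 0 := by simp [yTerm, yExp]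
  conv_lhs => simp only [ySum, map_sum, mul_sum, map_add, mul_add, Nat.sum_antidiagonal_succ',
    apply_ite, map_zero, mul_ite, mul_zero, h0, ite_self, sum_const_zero, zero_add,
    X2_mul_pderiv1_yTerm_succ]
  simp only [Nat.sum_antidiagonal_succ, Nat.cast_zero, zero_smul, ite_self, zero_add,
    Nat.cast_succ, ← sum_neg_distrib, neg_ite, neg_zero, add_assoc, add_comm 1]

lemma Xp_ySum (a b c : ℕ) :
    Xp (ySum a (b + 1) c) = (Complex.I * ((a : ℂ) + 1)) • ySum (a + 1) b c := by
  rw [Xp, X0_mul_pderiv3_ySum, X1_mul_pderiv2_ySum, sub_neg_eq_add, mul_smul, ← sum_add_distrib]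
  congr 1
  simp only [ySum, smul_sum, ← sum_add_distrib, smul_ite, smul_zero]
  refine sum_congr rfl fun x hx => sum_congr rfl fun y _ => ?_
  rw [HasAntidiagonal.mem_antidiagonal] at hx
  split_ifs
  · rw [← add_smul]
    congr 1
    exact_mod_cast hx
  · rw [add_zero]

lemma Xm_ySum (a b c : ℕ) :
    Xm (ySum (a + 1) b c) = (Complex.I * ((b : ℂ) + 1)) • ySum a (b + 1) c := by
  rw [Xm, X3_mul_pderiv0_ySum, X2_mul_pderiv1_ySum, sub_neg_eq_add, mul_smul, ← sum_add_distrib]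
  congr 1
  simp only [ySum, smul_sum, ← sum_add_distrib, smul_ite, smul_zero]
  refine sum_congr rfl fun x _ => sum_congr rfl fun y hy => ?_
  rw [HasAntidiagonal.mem_antidiagonal] at hy
  split_ifs
  · rw [← add_smul]
    congr 1
    norm_cast
    omega
  · rw [add_zero]

lemma X3_Ypoly (a b c d : ℕ) :
    X3 (Ypoly a b c d) = (Complex.I / 2 * ((b : ℂ) - a)) • Ypoly a b c d := by
  rw [Ypoly_eq_smul_ySum, X3_smul, X3_ySum, smul_comm]

lemma Xp_Ypoly (a b c d : ℕ) :
    Xp (Ypoly a (b + 1) c d) =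
      -(Complex.I * (√((a + 1) * (b + 1) : ℝ) : ℂ)) • Ypoly (a + 1) b c d := by
  have hnorm : √((a + 1) * (b + 1) : ℝ) * √(((a + 1)! * b ! * c ! * d ! : ℕ) : ℝ) =
      (a + 1) * √((a ! * (b + 1)! * c ! * d ! : ℕ) : ℝ) := by
    refine Real.sqrt_mul_sqrt_eq_mul_sqrt (by positivity) (by positivity) ?_
    push_cast [Nat.factorial_succ]
    ring
  rw [Ypoly_eq_smul_ySum, Ypoly_eq_smul_ySum, Xp_smul, Xp_ySum, smul_smul, smul_smul]
  congr 1
  have hnormC := congrArg ((↑) : ℝ → ℂ) hnorm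
  push_cast at hnormC ⊢
  linear_combination ((-1 : ℂ) ^ b * Complex.I) * hnormC

lemma Xm_Ypoly (a b c d : ℕ) :
    Xm (Ypoly (a + 1) b c d) =
      -(Complex.I * (√((a + 1) * (b + 1) : ℝ) : ℂ)) • Ypoly a (b + 1) c d := by
  have hnorm : √((a + 1) * (b + 1) : ℝ) * √((a ! * (b + 1)! * c ! * d ! : ℕ) : ℝ) =
      (b + 1) * √(((a + 1)! * b ! * c ! * d ! : ℕ) : ℝ) := by
    refine Real.sqrt_mul_sqrt_eq_mul_sqrt (by positivity) (by positivity) ?_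
    push_cast [Nat.factorial_succ]
    ring
  rw [Ypoly_eq_smul_ySum, Ypoly_eq_smul_ySum, Xm_smul, Xm_ySum, smul_smul, smul_smul]
  congr 1
  have hnormC := congrArg ((↑) : ℝ → ℂ) hnorm
  push_cast at hnormC ⊢
  linear_combination (-(-1 : ℂ) ^ b * Complex.I) * hnormC

theorem dirac_eigenspinor_components_general (a b c d : ℕ) (hb : 1 ≤ b)
    (ψ₁ ψ₂ φ₁ φ₂ : R4)
    (hψ₁ : ψ₁ = ((Real.sqrt (a + 1) : ℝ) : ℂ) • Ypoly a b c d)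
    (hψ₂ : ψ₂ = ((Real.sqrt b : ℝ) : ℂ) • Ypoly (a + 1) (b - 1) c d)
    (hφ₁ : φ₁ = -(((Real.sqrt b : ℝ) : ℂ) • Ypoly a b c d))
    (hφ₂ : φ₂ = ((Real.sqrt (a + 1) : ℝ) : ℂ) • Ypoly (a + 1) (b - 1) c d) :
    (2 * Complex.I) • (X3 ψ₁ + Xm ψ₂) = ((a + b : ℕ) : ℂ) • ψ₁ ∧
      (2 * Complex.I) • (Xp ψ₁ - X3 ψ₂) = ((a + b : ℕ) : ℂ) • ψ₂ ∧
        (2 * Complex.I) • (X3 φ₁ + Xm φ₂) = -(((a + b + 2 : ℕ) : ℂ) • φ₁) ∧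
          (2 * Complex.I) • (Xp φ₁ - X3 φ₂) = -(((a + b + 2 : ℕ) : ℂ) • φ₂) := by
  obtain ⟨b, rfl⟩ : ∃ n, b = n + 1 := ⟨b - 1, by omega⟩
  rw [Nat.add_sub_cancel] at hψ₂ hφ₂
  rw [← neg_smul] at hφ₁
  push_cast at hψ₂ hφ₁
  subst hψ₁ hψ₂ hφ₁ hφ₂
  set u : ℂ := ((√(a + 1) : ℝ) : ℂ)
  set v : ℂ := ((√(b + 1) : ℝ) : ℂ)
  have hu : u ^ 2 = a + 1 := by
    rw [← Complex.ofReal_pow, Real.sq_sqrt (by positivity)]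
    norm_cast
  have hv : v ^ 2 = b + 1 := by
    rw [← Complex.ofReal_pow, Real.sq_sqrt (by positivity)]
    norm_cast
  have huv : (√((a + 1) * (b + 1) : ℝ) : ℂ) = u * v := by
    rw [Real.sqrt_mul (by positivity), Complex.ofReal_mul]
  simp only [X3_smul, Xm_smul, Xp_smul, X3_Ypoly, Xm_Ypoly, Xp_Ypoly, huv, smul_smul, ← add_smul,
    ← sub_smul, ← neg_smul]
  refine ⟨congrArg (· • _) ?_, congrArg (· • _) ?_, congrArg (· • _) ?_, congrArg (· • _) ?_⟩ <;>
    push_cast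
  · linear_combination (u * (b + 1 - a) - 2 * u * v ^ 2) * Complex.I_sq + 2 * u * hv
  · linear_combination (-2 * u ^ 2 * v - v * (b - a - 1)) * Complex.I_sq + 2 * v * hu
  · linear_combination (-v * (b + 1 - a) - 2 * u ^ 2 * v) * Complex.I_sq + 2 * v * hu
  · linear_combination (2 * u * v ^ 2 - u * (b - a - 1)) * Complex.I_sq - 2 * u * hv

/-- eigenspinor component equations. With a = j+s, b = j−s, c = j+m,
d = j−m (so 2j = a+b) and s ≤ j−1 (i.e. 1 ≤ b), for ψ₁ = √(j+s+1)·Y^j_{sm},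
ψ₂ = √(j−s)·Y^j_{s+1,m} one has 2i(X₃ψ₁ + X₋ψ₂) = 2j·ψ₁ and
2i(X₊ψ₁ − X₃ψ₂) = 2j·ψ₂; for φ₁ = −√(j−s)·Y^j_{sm}, φ₂ = √(j+s+1)·Y^j_{s+1,m} one has
2i(X₃φ₁ + X₋φ₂) = −(2j+2)·φ₁ and 2i(X₊φ₁ − X₃φ₂) = −(2j+2)·φ₂. -/
theorem dirac_eigenspinor_components (a b c d : ℕ) (habcd : a + b = c + d) (hb : 1 ≤ b)
    (ψ₁ ψ₂ φ₁ φ₂ : R4)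
    (hψ₁ : ψ₁ = ((Real.sqrt (a + 1) : ℝ) : ℂ) • Ypoly a b c d)
    (hψ₂ : ψ₂ = ((Real.sqrt b : ℝ) : ℂ) • Ypoly (a + 1) (b - 1) c d)
    (hφ₁ : φ₁ = -(((Real.sqrt b : ℝ) : ℂ) • Ypoly a b c d))
    (hφ₂ : φ₂ = ((Real.sqrt (a + 1) : ℝ) : ℂ) • Ypoly (a + 1) (b - 1) c d) :
    (2 * Complex.I) • (X3 ψ₁ + Xm ψ₂) = ((a + b : ℕ) : ℂ) • ψ₁ ∧
      (2 * Complex.I) • (Xp ψ₁ - X3 ψ₂) = ((a + b : ℕ) : ℂ) • ψ₂ ∧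
        (2 * Complex.I) • (X3 φ₁ + Xm φ₂) = -(((a + b + 2 : ℕ) : ℂ) • φ₁) ∧
          (2 * Complex.I) • (Xp φ₁ - X3 φ₂) = -(((a + b + 2 : ℕ) : ℂ) • φ₂) :=
  dirac_eigenspinor_components_general a b c d hb ψ₁ ψ₂ φ₁ φ₂ hψ₁ hψ₂ hφ₁ hφ₂
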